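/- Every polynomial function on the surface $X_{a,b} = \{x^2y = z^2 - b + ax\}$, i.e., every element of the quotient ring $\mathbb{C}[x,y,z]/(x^2y - z^2 + b - ax)$, can be written uniquely in the form $f(x,y,z) = \sum_{i\geq 1} x^i a_i(z) + \sum_{i \geq 1} x y^i b_i(z) + \sum_{i \geq 1} y^i c_i(z) + d(z)$ with $a_i, b_i, c_i, d \in \mathbb{C}[z]$ and only finitely many terms nonzero. -/

import Mathlib

/-
Under the lexicographic order with `x > y > z` the defining polynomial
`x²y - z² + b - ax` is monic with leading monomial `x²y`. Division by it is therefore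
possible over any ring, so every class is represented by a polynomial none of whose
monomials is divisible by `x²y`; conversely a nonzero multiple `q·(x²y - …)` has leading
monomial `lm(q)·x²y`, so no nonzero such polynomial lies in the ideal. The monomials not
divisible by `x²y` are exactly those listed.
-/

open MvPolynomial
open scoped MonomialOrder

theorem MvPolynomial.coe_basisRestrictSupport_apply {σ R : Type*} [CommRing R]
    (S : Set (σ →₀ ℕ)) (s : S) :
    (basisRestrictSupport R S s : MvPolynomial σ R) = monomial s 1 := by
  classical
  change ((AddMonoidAlgebra.supportedEquivFinsupp (R := R) (S := R) S).symm (Finsupp.single s 1) :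
    AddMonoidAlgebra R (σ →₀ ℕ)) = _
  simp only [AddMonoidAlgebra.supportedEquivFinsupp, LinearEquiv.trans_symm, LinearEquiv.symm_mk,
    LinearEquiv.trans_apply, LinearEquiv.coe_mk, LinearMap.coe_mk, AddHom.coe_mk,
    Finsupp.supportedEquivFinsupp_symm_apply_coe, Finsupp.extendDomain_single,
    AddMonoidAlgebra.ofCoeff_single]
  rfl

namespace MonomialOrder

theorem lex_lt_of_apply_bot_lt {σ : Type*} [LinearOrder σ] [OrderBot σ] [WellFoundedGT σ]
    {c d : σ →₀ ℕ} (h : c ⊥ < d ⊥) : c ≺[lex] d :=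
  ⟨⊥, fun _ hj => absurd hj not_lt_bot, h⟩

variable {σ R : Type*} [CommRing R] (m : MonomialOrder σ)

def standardExponents (g : MvPolynomial σ R) : Set (σ →₀ ℕ) := {s | ¬ m.degree g ≤ s}

variable {m} {g : MvPolynomial σ R}

theorem eq_zero_of_mem_span_singleton_of_mem_restrictSupport (hg : IsUnit (m.leadingCoeff g))
    {r : MvPolynomial σ R} (hr : r ∈ Ideal.span {g})
    (hs : r ∈ restrictSupport R (m.standardExponents g)) : r = 0 := by
  by_contra hr0
  obtain ⟨q, rfl⟩ := Ideal.mem_span_singleton'.mp hr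
  have hq0 : q ≠ 0 := by rintro rfl; simp at hr0
  have hdeg := m.degree_mul_of_isRegular_right hq0 hg.isRegular
  exact hs (m.degree_mem_support hr0) (hdeg ▸ le_add_self)

theorem exists_mem_restrictSupport_sub_mem_span_singleton (hg : IsUnit (m.leadingCoeff g))
    (f : MvPolynomial σ R) :
    ∃ r ∈ restrictSupport R (m.standardExponents g), f - r ∈ Ideal.span {g} := by
  obtain ⟨q, r, rfl, -, hr⟩ := m.div_single hg f
  exact ⟨r, hr, by simpa using Ideal.mul_mem_left _ q (Ideal.mem_span_singleton_self g)⟩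

noncomputable def restrictSupportEquivQuotient (hg : IsUnit (m.leadingCoeff g)) :
    restrictSupport R (m.standardExponents g) ≃ₗ[R] MvPolynomial σ R ⧸ Ideal.span {g} :=
  LinearEquiv.ofBijective
    ((Ideal.Quotient.mkₐ R (Ideal.span {g})).toLinearMap ∘ₗ Submodule.subtype _)
    ⟨by
      rw [← LinearMap.ker_eq_bot, Submodule.eq_bot_iff]
      rintro ⟨r, hs⟩ hr
      have hr' : r ∈ Ideal.span {g} := Ideal.Quotient.eq_zero_iff_mem.mp hr
      exact Subtype.ext (eq_zero_of_mem_span_singleton_of_mem_restrictSupport hg hr' hs),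
    by
      intro u
      obtain ⟨f, rfl⟩ := Ideal.Quotient.mk_surjective u
      obtain ⟨r, hs, hfr⟩ := exists_mem_restrictSupport_sub_mem_span_singleton hg f
      exact ⟨⟨r, hs⟩, (Ideal.Quotient.eq.mpr hfr).symm⟩⟩

noncomputable def standardBasis (hg : IsUnit (m.leadingCoeff g)) :
    Module.Basis (m.standardExponents g) R (MvPolynomial σ R ⧸ Ideal.span {g}) :=
  (basisRestrictSupport R _).map (restrictSupportEquivQuotient hg)

theorem standardBasis_apply (hg : IsUnit (m.leadingCoeff g)) (s : m.standardExponents g) :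
    standardBasis hg s = Ideal.Quotient.mk (Ideal.span {g}) (monomial s 1) := by
  rw [standardBasis, Module.Basis.map_apply]
  exact congrArg (Ideal.Quotient.mk _) (MvPolynomial.coe_basisRestrictSupport_apply _ s)

end MonomialOrder

theorem not_le_single_add_single_iff (s : Fin 3 →₀ ℕ) :
    ¬ Finsupp.single 0 2 + Finsupp.single 1 1 ≤ s ↔ s 0 ≤ 1 ∨ s 1 = 0 := by
  simp [Finsupp.le_def, Fin.forall_fin_succ, Finsupp.single_apply]
  omega

noncomputable def xabExponent : (ℕ × ℕ) ⊕ (ℕ × ℕ) ⊕ (ℕ × ℕ) ⊕ ℕ → Fin 3 →₀ ℕ :=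
  Sum.elim (fun (i, m) => Finsupp.single 0 (i + 1) + Finsupp.single 2 m) <|
    Sum.elim (fun (j, m) => Finsupp.single 0 1 + Finsupp.single 1 (j + 1) + Finsupp.single 2 m) <|
      Sum.elim (fun (j, m) => Finsupp.single 1 (j + 1) + Finsupp.single 2 m) (Finsupp.single 2)

theorem xabExponent_injective : Function.Injective xabExponent := by
  intro p q h
  have h0 := DFunLike.congr_fun h 0
  have h1 := DFunLike.congr_fun h 1
  have h2 := DFunLike.congr_fun h 2
  rcases p with ⟨i, m⟩ | ⟨j, m⟩ | ⟨j, m⟩ | m <;> rcases q with ⟨i', m'⟩ | ⟨j', m'⟩ | ⟨j', m'⟩ | m' <;>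
    simp [xabExponent] at h0 h1 h2 ⊢ <;> omega

theorem range_xabExponent : Set.range xabExponent = {s | s 0 ≤ 1 ∨ s 1 = 0} := by
  ext s
  constructor
  · rintro ⟨⟨i, m⟩ | ⟨j, m⟩ | ⟨j, m⟩ | m, rfl⟩ <;> simp [xabExponent]
  · intro hs
    rcases h0 : s 0 with _ | _ | i <;> rcases h1 : s 1 with _ | j <;>
      [use .inr (.inr (.inr (s 2))); use .inr (.inr (.inl (j, s 2))); use .inl (0, s 2);
        use .inr (.inl (j, s 2)); use .inl (i + 1, s 2); simp [h0, h1] at hs] <;>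
      ext k <;> fin_cases k <;> simp [xabExponent, h0, h1]

section
variable {R : Type*} [CommRing R]

noncomputable def xabEquation (a b : R) : MvPolynomial (Fin 3) R :=
  X 0 ^ 2 * X 1 - X 2 ^ 2 + C b - C a * X 0

variable [Nontrivial R] (a b : R)

theorem lex_degree_xabEquation_and_monic :
    MonomialOrder.lex.degree (xabEquation a b) = Finsupp.single 0 2 + Finsupp.single 1 1 ∧
      MonomialOrder.lex.Monic (xabEquation a b) := by
  set d : Fin 3 →₀ ℕ := Finsupp.single 0 2 + Finsupp.single 1 1
  set h : MvPolynomial (Fin 3) R := C b - X 2 ^ 2 - C a * X 0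
  have hlead : (X 0 ^ 2 * X 1 : MvPolynomial (Fin 3) R) = monomial d 1 := by
    rw [X_pow_eq_monomial, X, monomial_mul, one_mul]
  have hlow : h ∈ restrictSupport R {c | c 0 ≤ 1} := by
    refine Submodule.sub_mem _ (Submodule.sub_mem _ ?_ ?_) ?_
    · rw [C_apply, monomial_mem_restrictSupport]; simp
    · simp [X_pow_eq_monomial]
    · simp [X, C_mul_monomial]
  have hdeg : MonomialOrder.lex.degree h ≺[MonomialOrder.lex] d := by
    have hd0 : 1 < d ⊥ := by simp [d, bot_eq_zero]
    rw [MonomialOrder.degree_lt_iff (MonomialOrder.lex_lt_of_apply_bot_lt (by simpa using hd0.pos))]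
    exact fun c hc => MonomialOrder.lex_lt_of_apply_bot_lt ((hlow hc).trans_lt hd0)
  have hg : xabEquation a b = monomial d 1 + h := by
    rw [xabEquation, ← hlead]; ring
  have hd : MonomialOrder.lex.degree (monomial d (1 : R)) = d := by
    classical rw [MonomialOrder.degree_monomial, if_neg one_ne_zero]
  rw [← hd] at hdeg
  rw [hg, MonomialOrder.degree_add_of_lt hdeg, hd]
  exact ⟨rfl, MonomialOrder.monic_monomial_one.add_of_lt hdeg⟩

theorem lex_standardExponents_xabEquation :
    MonomialOrder.lex.standardExponents (xabEquation a b) = Set.range xabExponent := by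
  ext s
  rw [range_xabExponent, MonomialOrder.standardExponents, Set.mem_ofPred_eq, Set.mem_ofPred_eq,
    (lex_degree_xabEquation_and_monic a b).1, not_le_single_add_single_iff]

end

/-- Every element of the coordinate ring `ℂ[x,y,z]/(x²y - z² + b - ax)` of `X_{a,b}`
can be written uniquely as `∑ xⁱaᵢ(z) + ∑ x yʲ bⱼ(z) + ∑ yʲ cⱼ(z) + d(z)` (`i,j ≥ 1`):
that is, the classes of the monomials `x^(i+1) z^m`, `x y^(j+1) z^m`, `y^(j+1) z^m`, `z^m`
form a `ℂ`-vector space basis of the quotient ring. -/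
theorem Xab_monomial_basis (a b : ℂ) :
    let x : MvPolynomial (Fin 3) ℂ := X 0
    let y : MvPolynomial (Fin 3) ℂ := X 1
    let z : MvPolynomial (Fin 3) ℂ := X 2
    let I : Ideal (MvPolynomial (Fin 3) ℂ) :=
      Ideal.span {x ^ 2 * y - z ^ 2 + C b - C a * x}
    let fam : (ℕ × ℕ) ⊕ (ℕ × ℕ) ⊕ (ℕ × ℕ) ⊕ ℕ →
        MvPolynomial (Fin 3) ℂ ⧸ I := fun idx =>
      match idx with
      | .inl (i, m) => Ideal.Quotient.mk I (x ^ (i + 1) * z ^ m)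
      | .inr (.inl (j, m)) => Ideal.Quotient.mk I (x * y ^ (j + 1) * z ^ m)
      | .inr (.inr (.inl (j, m))) => Ideal.Quotient.mk I (y ^ (j + 1) * z ^ m)
      | .inr (.inr (.inr m)) => Ideal.Quotient.mk I (z ^ m)
    LinearIndependent ℂ fam ∧ Submodule.span ℂ (Set.range fam) = ⊤ := by
  intro x y z I fam
  have hunit : IsUnit (MonomialOrder.lex.leadingCoeff (xabEquation a b)) := by
    rw [(lex_degree_xabEquation_and_monic a b).2.leadingCoeff_eq_one]
    exact isUnit_one
  let e := (Equiv.ofInjective _ xabExponent_injective).trans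
    (Equiv.setCongr (lex_standardExponents_xabEquation a b).symm)
  let B := (MonomialOrder.standardBasis hunit).reindex e.symm
  have hmonomial : ∀ p, fam p = Ideal.Quotient.mk I (monomial (xabExponent p) 1) := by
    rintro (⟨i, m⟩ | ⟨j, m⟩ | ⟨j, m⟩ | m) <;>
      simp only [fam, xabExponent, Sum.elim_inl, Sum.elim_inr, monomial_add_single, ← X_pow_eq_monomial, pow_one] <;> rfl
  have hfam : fam = B := by
    funext p
    rw [hmonomial, Module.Basis.reindex_apply, Equiv.symm_symm, MonomialOrder.standardBasis_apply]
    rfl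
  exact hfam ▸ ⟨B.linearIndependent, B.span_eq⟩
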